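/- Let B = {1342, 1432}. For every gap vector (g₁,g₂,g₃) ∈ ℕ³, Z(B;12;(g₁,g₂,g₃)) ≠ ∅ if and only if g₂ ≤ 1; equivalently, G(12) = Av((0,2,0)) as a lower order ideal of ℕ³. -/
import Mathlib


/-- A permutation of arbitrary length: a length `n` together with a
bijection of `Fin n` (0-indexed positions and values). -/
abbrev PermAny : Type := Σ n : ℕ, Equiv.Perm (Fin n)

/-- `β` is contained as a pattern in `π`. -/
def ContainsPat {k n : ℕ} (β : Equiv.Perm (Fin k)) (π : Equiv.Perm (Fin n)) : Prop :=
  ∃ f : Fin k → Fin n, StrictMono f ∧ ∀ a b : Fin k, β a < β b ↔ π (f a) < π (f b)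

/-- `Av(B)`: the permutations avoiding every member of `B`. -/
def AvSet (B : Set PermAny) : Set PermAny :=
  {p | ∀ b ∈ B, ¬ ContainsPat b.2 p.2}

/-- A permutation class: closed downwards under pattern containment. -/
def IsPermClass (C : Set PermAny) : Prop :=
  ∀ p ∈ C, ∀ q : PermAny, ContainsPat q.2 p.2 → q ∈ C

/-- The positions `a,…,b` form an interval of `π`: the corresponding values
form a set of consecutive integers. -/
def IsIntervalAt {n : ℕ} (π : Equiv.Perm (Fin n)) (a b : Fin n) : Prop :=
  a ≤ b ∧ ∃ c : ℕ,
    (Finset.Icc a b).image (fun i => (π i : ℕ)) = Finset.Icc c (c + ((b : ℕ) - (a : ℕ)))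

/-- A permutation is simple when all of its intervals are trivial. -/
def IsSimplePerm {n : ℕ} (π : Equiv.Perm (Fin n)) : Prop :=
  ∀ a b : Fin n, IsIntervalAt π a b → a = b ∨ ((a : ℕ) = 0 ∧ (b : ℕ) = n - 1)

/-- `Z(B;π;g)`: the set of `B`-avoiding permutations of length `k + ‖g‖` whose
`k` smallest values occupy the positions prescribed by the gap vector `g`
and form the pattern `π`.  (0-indexed: entry `π r` sits at position
`g 0 + ⋯ + g r + r`.) -/
def ZSet (B : Set PermAny) {k : ℕ} (π : Equiv.Perm (Fin k)) (g : Fin (k + 1) → ℕ) :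
    Set (Equiv.Perm (Fin (k + ∑ j, g j))) :=
  {p | (⟨k + ∑ j, g j, p⟩ : PermAny) ∈ AvSet B ∧
    ∀ r : Fin k, ∀ i : Fin (k + ∑ j, g j),
      (i : ℕ) = (∑ j ∈ Finset.univ.filter fun j : Fin (k + 1) => (j : ℕ) ≤ (r : ℕ), g j)
          + (r : ℕ) →
      (p i : ℕ) = (π r : ℕ)}

/-- `J(π)`: the set of gap positions `j` such that `Z(B;π;g)` is empty whenever
`g j > 0`. -/
def JSet (B : Set PermAny) {k : ℕ} (π : Equiv.Perm (Fin k)) : Set (Fin (k + 1)) :=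
  {j | ∀ g : Fin (k + 1) → ℕ, 0 < g j → ZSet B π g = ∅}

/-- `d_r(π)`: delete the entry at position `r` from `π` and standardize. -/
def delEntry {k : ℕ} (π : Equiv.Perm (Fin (k + 1))) (r : Fin (k + 1)) : Equiv.Perm (Fin k) :=
  Equiv.removeNone ((finSuccEquiv' r).symm.trans (π.trans (finSuccEquiv' (π r))))

/-- `d_r(g)`: merge the gaps on either side of position `r`. -/
def delGap {k : ℕ} (g : Fin (k + 2) → ℕ) (r : Fin (k + 1)) : Fin (k + 1) → ℕ :=
  fun j =>
    if (j : ℕ) < (r : ℕ) then g (Fin.castSucc j)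
    else if (j : ℕ) = (r : ℕ) then g (Fin.castSucc j) + g j.succ
    else g j.succ

/-- The entry `π r` is ES-reducible for `π` with respect to `B`
(Zeilberger's original notion). -/
def ESRed (B : Set PermAny) {k : ℕ} (π : Equiv.Perm (Fin (k + 1))) (r : Fin (k + 1)) : Prop :=
  ∀ g : Fin (k + 2) → ℕ, (∀ j ∈ JSet B π, g j = 0) →
    (ZSet B π g).ncard = (ZSet B (delEntry π r) (delGap g r)).ncard

/-- The entry `π r` is ES⁺-reducible for `π` with respect to `B`. -/
def ESPlusRed (B : Set PermAny) {k : ℕ} (π : Equiv.Perm (Fin (k + 1))) (r : Fin (k + 1)) : Prop :=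
  ∀ g : Fin (k + 2) → ℕ, (ZSet B π g).Nonempty →
    (ZSet B π g).ncard = (ZSet B (delEntry π r) (delGap g r)).ncard

/-- `G_r(π)`: the largest lower order ideal of gap vectors `g` such that for all
`h ≤ g`, either `Z(B;π;h)` is nonempty or `Z(B;d_r(π);d_r(h))` is empty. -/
def GrSet (B : Set PermAny) {k : ℕ} (π : Equiv.Perm (Fin (k + 1))) (r : Fin (k + 1)) :
    Set (Fin (k + 2) → ℕ) :=
  {g | ∀ h : Fin (k + 2) → ℕ, h ≤ g →
    (ZSet B π h).Nonempty ∨ ZSet B (delEntry π r) (delGap h r) = ∅}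

noncomputable def p1342 : Equiv.Perm (Fin 4) := Equiv.ofBijective ![0, 2, 3, 1] (by decide)
noncomputable def p1432 : Equiv.Perm (Fin 4) := Equiv.ofBijective ![0, 3, 2, 1] (by decide)


/-- The explicit witness function used in the backward direction of the theorem. -/
def Ffun (a b n i : ℕ) : ℕ :=
  if i < a then i + 2
  else if i = a then 0
  else if b = 1 ∧ i = a + 1 then n - 1
  else if i = a + b + 1 then 1
  else if b = 1 then i - 1 else i

lemma Ffun_spec (a b c n i : ℕ) (hb : b ≤ 1) (hn : n = a + b + c + 2) (hi : i < n) :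
    Ffun a b n i < n ∧
    ((i < a ∧ Ffun a b n i = i + 2) ∨ (i = a ∧ Ffun a b n i = 0) ∨
     (b = 1 ∧ i = a + 1 ∧ Ffun a b n i = n - 1) ∨ (i = a + b + 1 ∧ Ffun a b n i = 1) ∨
     (a + b + 1 < i ∧ b = 1 ∧ Ffun a b n i = i - 1) ∨
     (a + b + 1 < i ∧ b = 0 ∧ Ffun a b n i = i)) := by
  unfold Ffun; split_ifs <;> omega

lemma Ffun_inj (a b c n : ℕ) (hb : b ≤ 1) (hn : n = a + b + c + 2) {i j : ℕ}
    (hi : i < n) (hj : j < n) (h : Ffun a b n i = Ffun a b n j) : i = j := by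
  have s1 := Ffun_spec a b c n i hb hn hi
  have s2 := Ffun_spec a b c n j hb hn hj
  omega

lemma strictMono_four {n : ℕ} (j0 j1 j2 j3 : Fin n)
    (h01 : (j0:ℕ) < j1) (h12 : (j1:ℕ) < j2) (h23 : (j2:ℕ) < j3) :
    StrictMono ![j0, j1, j2, j3] := by
  intro u v huv
  fin_cases u <;> fin_cases v <;>
    simp only [Fin.mk_zero, Fin.mk_one, show (⟨2, by omega⟩ : Fin 4) = 2 from rfl,
      show (⟨3, by omega⟩ : Fin 4) = 3 from rfl,
      Matrix.cons_val_zero, Matrix.cons_val_one, Matrix.head_cons,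
      Matrix.cons_val_two, Matrix.tail_cons, Matrix.cons_val_three,
      Fin.lt_def, show ((0 : Fin 4):ℕ) = 0 from rfl, show ((1 : Fin 4):ℕ) = 1 from rfl,
      show ((2 : Fin 4):ℕ) = 2 from rfl, show ((3 : Fin 4):ℕ) = 3 from rfl] at huv ⊢ <;>
    omega

lemma contains_of_1342 {n : ℕ} (p : Equiv.Perm (Fin n)) (j0 j1 j2 j3 : Fin n)
    (h01 : (j0:ℕ) < j1) (h12 : (j1:ℕ) < j2) (h23 : (j2:ℕ) < j3)
    (v0 : (p j0 : ℕ) = 0) (v3 : (p j3 : ℕ) = 1)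
    (v1 : 2 ≤ (p j1 : ℕ)) (v12 : (p j1 : ℕ) < (p j2 : ℕ)) :
    ContainsPat p1342 p := by
  have q0 : ((p1342 0 : Fin 4) : ℕ) = 0 := rfl
  have q1 : ((p1342 1 : Fin 4) : ℕ) = 2 := rfl
  have q2 : ((p1342 2 : Fin 4) : ℕ) = 3 := rfl
  have q3 : ((p1342 3 : Fin 4) : ℕ) = 1 := rfl
  refine ⟨![j0, j1, j2, j3], strictMono_four j0 j1 j2 j3 h01 h12 h23, ?_⟩
  intro u v
  fin_cases u <;> fin_cases v <;>
    simp only [Fin.mk_zero, Fin.mk_one, show (⟨2, by omega⟩ : Fin 4) = 2 from rfl,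
      show (⟨3, by omega⟩ : Fin 4) = 3 from rfl,
      Matrix.cons_val_zero, Matrix.cons_val_one, Matrix.head_cons,
      Matrix.cons_val_two, Matrix.tail_cons, Matrix.cons_val_three,
      Fin.lt_def, q0, q1, q2, q3] <;> omega

lemma contains_of_1432 {n : ℕ} (p : Equiv.Perm (Fin n)) (j0 j1 j2 j3 : Fin n)
    (h01 : (j0:ℕ) < j1) (h12 : (j1:ℕ) < j2) (h23 : (j2:ℕ) < j3)
    (v0 : (p j0 : ℕ) = 0) (v3 : (p j3 : ℕ) = 1)
    (v2 : 2 ≤ (p j2 : ℕ)) (v21 : (p j2 : ℕ) < (p j1 : ℕ)) :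
    ContainsPat p1432 p := by
  have q0 : ((p1432 0 : Fin 4) : ℕ) = 0 := rfl
  have q1 : ((p1432 1 : Fin 4) : ℕ) = 3 := rfl
  have q2 : ((p1432 2 : Fin 4) : ℕ) = 2 := rfl
  have q3 : ((p1432 3 : Fin 4) : ℕ) = 1 := rfl
  refine ⟨![j0, j1, j2, j3], strictMono_four j0 j1 j2 j3 h01 h12 h23, ?_⟩
  intro u v
  fin_cases u <;> fin_cases v <;>
    simp only [Fin.mk_zero, Fin.mk_one, show (⟨2, by omega⟩ : Fin 4) = 2 from rfl,
      show (⟨3, by omega⟩ : Fin 4) = 3 from rfl,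
      Matrix.cons_val_zero, Matrix.cons_val_one, Matrix.head_cons,
      Matrix.cons_val_two, Matrix.tail_cons, Matrix.cons_val_three,
      Fin.lt_def, q0, q1, q2, q3] <;> omega

/-- For `B = {1342, 1432}`, the set `Z(B;12;(g₁,g₂,g₃))` is
nonempty if and only if `g₂ ≤ 1`; i.e. `G(12) = Av((0,2,0))`. -/
theorem G_of_12_for_1342_1432 (g : Fin 3 → ℕ) :
    (ZSet ({⟨4, p1342⟩, ⟨4, p1432⟩} : Set PermAny)
        (1 : Equiv.Perm (Fin 2)) g).Nonempty ↔ g 1 ≤ 1 := by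
  have hs : (∑ j, g j) = g 0 + g 1 + g 2 := Fin.sum_univ_three g
  have hf0 : (Finset.univ.filter fun j : Fin 3 => (j : ℕ) ≤ ((0 : Fin 2) : ℕ)) = {0} := by decide
  have hf1 : (Finset.univ.filter fun j : Fin 3 => (j : ℕ) ≤ ((1 : Fin 2) : ℕ)) = {0, 1} := by
    decide
  have hsum : ∀ r : Fin 2,
      (∑ j ∈ Finset.univ.filter fun j : Fin 3 => (j : ℕ) ≤ (r : ℕ), g j)
        = if (r : ℕ) = 0 then g 0 else g 0 + g 1 := by
    rw [Fin.forall_fin_two]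
    refine ⟨?_, ?_⟩
    · rw [hf0, Finset.sum_singleton]; simp
    · rw [hf1, Finset.sum_pair (by decide)]; simp
  constructor
  · rintro ⟨p, hav, hpos⟩
    by_contra hg
    push_neg at hg
    obtain ⟨i0, hi0⟩ : ∃ i : Fin (2 + ∑ j, g j), (i : ℕ) = g 0 := ⟨⟨g 0, by omega⟩, rfl⟩
    obtain ⟨i1, hi1⟩ : ∃ i : Fin (2 + ∑ j, g j), (i : ℕ) = g 0 + 1 := ⟨⟨g 0 + 1, by omega⟩, rfl⟩
    obtain ⟨i2, hi2⟩ : ∃ i : Fin (2 + ∑ j, g j), (i : ℕ) = g 0 + 2 := ⟨⟨g 0 + 2, by omega⟩, rfl⟩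
    obtain ⟨i3, hi3⟩ : ∃ i : Fin (2 + ∑ j, g j), (i : ℕ) = g 0 + g 1 + 1 :=
      ⟨⟨g 0 + g 1 + 1, by omega⟩, rfl⟩
    have h0 : (p i0 : ℕ) = 0 := by
      have := hpos 0 i0 (by rw [hsum 0]; simp [hi0])
      simpa using this
    have h1 : (p i3 : ℕ) = 1 := by
      have := hpos 1 i3 (by rw [hsum 1]; simp [hi3])
      simpa using this
    have hne : ∀ u v : Fin (2 + ∑ j, g j), (p u : ℕ) = (p v : ℕ) → (u : ℕ) = (v : ℕ) := by
      intro u v h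
      have := p.injective (Fin.ext h)
      rw [this]
    have ha : 2 ≤ (p i1 : ℕ) := by
      rcases Nat.lt_or_ge (p i1 : ℕ) 2 with h | h
      · have h' : (p i1 : ℕ) = 0 ∨ (p i1 : ℕ) = 1 := by omega
        rcases h' with h' | h'
        · have := hne i1 i0 (by omega); omega
        · have := hne i1 i3 (by omega); omega
      · exact h
    have hb2 : 2 ≤ (p i2 : ℕ) := by
      rcases Nat.lt_or_ge (p i2 : ℕ) 2 with h | h
      · have h' : (p i2 : ℕ) = 0 ∨ (p i2 : ℕ) = 1 := by omega
        rcases h' with h' | h'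
        · have := hne i2 i0 (by omega); omega
        · have := hne i2 i3 (by omega); omega
      · exact h
    have hab : (p i1 : ℕ) ≠ (p i2 : ℕ) := by
      intro h; have := hne i1 i2 h; omega
    rcases Nat.lt_or_ge (p i1 : ℕ) (p i2 : ℕ) with hlt | hge
    · exact hav ⟨4, p1342⟩ (Set.mem_insert _ _)
        (contains_of_1342 p i0 i1 i2 i3 (by omega) (by omega) (by omega) h0 h1 ha hlt)
    · have hlt' : (p i2 : ℕ) < (p i1 : ℕ) := lt_of_le_of_ne hge (Ne.symm hab)
      exact hav ⟨4, p1432⟩ (Set.mem_insert_of_mem _ rfl)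
        (contains_of_1432 p i0 i1 i2 i3 (by omega) (by omega) (by omega) h0 h1 hb2 hlt')
  · intro hg1
    have hn : 2 + (∑ j, g j) = g 0 + g 1 + g 2 + 2 := by omega
    have hlt : ∀ i : Fin (2 + ∑ j, g j),
        Ffun (g 0) (g 1) (2 + ∑ j, g j) (i : ℕ) < 2 + ∑ j, g j := fun i =>
      (Ffun_spec (g 0) (g 1) (g 2) _ _ hg1 hn i.isLt).1
    have hinj : Function.Injective
        (fun i : Fin (2 + ∑ j, g j) =>
          (⟨Ffun (g 0) (g 1) (2 + ∑ j, g j) (i : ℕ), hlt i⟩ : Fin (2 + ∑ j, g j))) := by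
      intro i j h
      exact Fin.ext (Ffun_inj (g 0) (g 1) (g 2) _ hg1 hn i.isLt j.isLt (congrArg Fin.val h))
    set q : Equiv.Perm (Fin (2 + ∑ j, g j)) :=
      Equiv.ofBijective _ (Finite.injective_iff_bijective.mp hinj) with hqdef
    have hval : ∀ i : Fin (2 + ∑ j, g j), (q i : ℕ) = Ffun (g 0) (g 1) (2 + ∑ j, g j) (i : ℕ) :=
      fun i => rfl
    refine ⟨q, ?_, ?_⟩
    · rintro b hb'
      simp only [Set.mem_insert_iff, Set.mem_singleton_iff] at hb'
      rcases hb' with rfl | rfl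
      · rintro ⟨f, hmono, hpat⟩
        have m01 : ((f 0 : Fin _) : ℕ) < (f 1 : ℕ) := hmono (by decide)
        have m12 : ((f 1 : Fin _) : ℕ) < (f 2 : ℕ) := hmono (by decide)
        have m23 : ((f 2 : Fin _) : ℕ) < (f 3 : ℕ) := hmono (by decide)
        have c01 : Ffun (g 0) (g 1) (2 + ∑ j, g j) ((f 0 : Fin _) : ℕ)
            < Ffun (g 0) (g 1) (2 + ∑ j, g j) ((f 1 : Fin _) : ℕ) := by
          have := (hpat 0 1).mp (by decide); rw [Fin.lt_def, hval, hval] at this; exact this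
        have c03 : Ffun (g 0) (g 1) (2 + ∑ j, g j) ((f 0 : Fin _) : ℕ)
            < Ffun (g 0) (g 1) (2 + ∑ j, g j) ((f 3 : Fin _) : ℕ) := by
          have := (hpat 0 3).mp (by decide); rw [Fin.lt_def, hval, hval] at this; exact this
        have c12 : Ffun (g 0) (g 1) (2 + ∑ j, g j) ((f 1 : Fin _) : ℕ)
            < Ffun (g 0) (g 1) (2 + ∑ j, g j) ((f 2 : Fin _) : ℕ) := by
          have := (hpat 1 2).mp (by decide); rw [Fin.lt_def, hval, hval] at this; exact this
        have c31 : Ffun (g 0) (g 1) (2 + ∑ j, g j) ((f 3 : Fin _) : ℕ)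
            < Ffun (g 0) (g 1) (2 + ∑ j, g j) ((f 1 : Fin _) : ℕ) := by
          have := (hpat 3 1).mp (by decide); rw [Fin.lt_def, hval, hval] at this; exact this
        have s0 := Ffun_spec (g 0) (g 1) (g 2) _ ((f 0 : Fin _) : ℕ) hg1 hn (f 0).isLt
        have s1 := Ffun_spec (g 0) (g 1) (g 2) _ ((f 1 : Fin _) : ℕ) hg1 hn (f 1).isLt
        have s2 := Ffun_spec (g 0) (g 1) (g 2) _ ((f 2 : Fin _) : ℕ) hg1 hn (f 2).isLt
        have s3 := Ffun_spec (g 0) (g 1) (g 2) _ ((f 3 : Fin _) : ℕ) hg1 hn (f 3).isLt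
        omega
      · rintro ⟨f, hmono, hpat⟩
        have m01 : ((f 0 : Fin _) : ℕ) < (f 1 : ℕ) := hmono (by decide)
        have m12 : ((f 1 : Fin _) : ℕ) < (f 2 : ℕ) := hmono (by decide)
        have m23 : ((f 2 : Fin _) : ℕ) < (f 3 : ℕ) := hmono (by decide)
        have c03 : Ffun (g 0) (g 1) (2 + ∑ j, g j) ((f 0 : Fin _) : ℕ)
            < Ffun (g 0) (g 1) (2 + ∑ j, g j) ((f 3 : Fin _) : ℕ) := by
          have := (hpat 0 3).mp (by decide); rw [Fin.lt_def, hval, hval] at this; exact this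
        have c21 : Ffun (g 0) (g 1) (2 + ∑ j, g j) ((f 2 : Fin _) : ℕ)
            < Ffun (g 0) (g 1) (2 + ∑ j, g j) ((f 1 : Fin _) : ℕ) := by
          have := (hpat 2 1).mp (by decide); rw [Fin.lt_def, hval, hval] at this; exact this
        have c32 : Ffun (g 0) (g 1) (2 + ∑ j, g j) ((f 3 : Fin _) : ℕ)
            < Ffun (g 0) (g 1) (2 + ∑ j, g j) ((f 2 : Fin _) : ℕ) := by
          have := (hpat 3 2).mp (by decide); rw [Fin.lt_def, hval, hval] at this; exact this
        have s0 := Ffun_spec (g 0) (g 1) (g 2) _ ((f 0 : Fin _) : ℕ) hg1 hn (f 0).isLt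
        have s1 := Ffun_spec (g 0) (g 1) (g 2) _ ((f 1 : Fin _) : ℕ) hg1 hn (f 1).isLt
        have s2 := Ffun_spec (g 0) (g 1) (g 2) _ ((f 2 : Fin _) : ℕ) hg1 hn (f 2).isLt
        have s3 := Ffun_spec (g 0) (g 1) (g 2) _ ((f 3 : Fin _) : ℕ) hg1 hn (f 3).isLt
        omega
    · intro r i hi
      have hr : ((1 : Equiv.Perm (Fin 2)) r : ℕ) = (r : ℕ) := by simp
      rw [hval, hr]
      rw [hsum r] at hi
      have hsp := Ffun_spec (g 0) (g 1) (g 2) _ (i : ℕ) hg1 hn i.isLt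
      have hrlt := r.isLt
      split_ifs at hi <;> omega
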